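/- arXiv:1504.07524 — 3 statements merged into one kernel-verified Lean document; each statement's English description precedes it below -/
import Mathlib

section
/- Let x_1, ..., x_{N+1} be N+1 vectors in ℂ^2. The set of N-fold tensor powers {x_k^⊗N}_{k=1}^{N+1} is linearly independent (and hence a basis of the symmetric subspace of (ℂ^2)^⊗N) if and only if the vectors x_1, ..., x_{N+1} are pairwise linearly independent. -/
open scoped BigOperators

/-- The `N`-fold tensor power of a qubit vector `x : Fin 2 → ℂ`, written as a
coefficient tensor on `(Fin N → Fin 2)`. -/
def tpow (x : Fin 2 → ℂ) (N : ℕ) : (Fin N → Fin 2) → ℂ :=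
  fun f => ∏ i, x (f i)

/-- A state of `N` qubits is symmetric if it is invariant under every
permutation of the tensor factors. -/
def IsSymmetricState {N : ℕ} (ψ : (Fin N → Fin 2) → ℂ) : Prop :=
  ∀ σ : Equiv.Perm (Fin N), ∀ f : Fin N → Fin 2, ψ (f ∘ σ) = ψ f

/-- A family of qubit vectors is pairwise linearly independent if every two
distinct members are linearly independent. -/
def PairwiseLinIndep {D : ℕ} (x : Fin D → Fin 2 → ℂ) : Prop :=
  ∀ k l : Fin D, k ≠ l → LinearIndependent ℂ ![x k, x l]

/-- Optimal bond dimension: the minimal `D` such that `ψ` is a sum of `D`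
`N`-fold tensor powers of qubit vectors. -/
noncomputable def bondDim {N : ℕ} (ψ : (Fin N → Fin 2) → ℂ) : ℕ :=
  sInf {D | ∃ x : Fin D → Fin 2 → ℂ, ψ = ∑ k : Fin D, tpow (x k) N}

/-- Standard basis vector `|0⟩` of `ℂ²`. -/
def e0 : Fin 2 → ℂ := fun i => if i = 0 then 1 else 0

/-- Standard basis vector `|1⟩` of `ℂ²`. -/
def e1 : Fin 2 → ℂ := fun i => if i = 1 then 1 else 0

/-- The GHZ state of `N` qubits. -/
noncomputable def GHZ (N : ℕ) : (Fin N → Fin 2) → ℂ :=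
  (1 / (Real.sqrt 2 : ℂ)) • (tpow e0 N + tpow e1 N)

/-- The W state of `N` qubits. -/
noncomputable def Wstate (N : ℕ) : (Fin N → Fin 2) → ℂ :=
  fun f => (1 / (Real.sqrt N : ℂ)) *
    ∑ j : Fin N, ∏ i : Fin N, (if i = j then e1 (f i) else e0 (f i))

/-- Tensor product of an `M`-qubit tensor and an `L`-qubit tensor. -/
def otimes {M L : ℕ} (ξ : (Fin M → Fin 2) → ℂ) (χ : (Fin L → Fin 2) → ℂ) :
    (Fin (M + L) → Fin 2) → ℂ :=
  fun f => ξ (fun i => f (Fin.castAdd L i)) * χ (fun j => f (Fin.natAdd M j))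

/-- Schmidt rank of an `(M, L)`-bipartite state: the minimal number of product
terms needed to express it. -/
noncomputable def schmidtRank {M L : ℕ} (ψ : (Fin (M + L) → Fin 2) → ℂ) : ℕ :=
  sInf {s | ∃ ξ : Fin s → (Fin M → Fin 2) → ℂ, ∃ χ : Fin s → (Fin L → Fin 2) → ℂ,
    ψ = ∑ k : Fin s, otimes (ξ k) (χ k)}

/-- Reduced density matrix of the first `M` qubits of an `(M + L)`-qubit state,
obtained by tracing out the last `L` qubits. -/
noncomputable def rdm (M L : ℕ) (ψ : (Fin (M + L) → Fin 2) → ℂ) :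
    Matrix (Fin M → Fin 2) (Fin M → Fin 2) ℂ :=
  Matrix.of fun a b => ∑ g : Fin L → Fin 2, ψ (Fin.append a g) * star (ψ (Fin.append b g))

/-!
The coefficient of `x^⊗N` at an index with `j` ones and `N - j` zeros is
`x 1 ^ j * x 0 ^ (N - j)`. Reading off these coefficients for `j = 0, …, N` maps the tensor
powers to the rows of the homogeneous Vandermonde matrix of the points `(x k 1 : x k 0)`, whose
determinant is the product of the `2 × 2` minors of the pairs `x k, x l`; so pairwise
independence makes the tensor powers independent. Conversely, `x k = a • x l` gives
`x k ^⊗N = a ^ N • x l ^⊗N`.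
-/

open Matrix

lemma linearIndependent_pair_iff_det_ne_zero {K : Type*} [Field K] {u v : Fin 2 → K} :
    LinearIndependent K ![u, v] ↔ u 0 * v 1 - u 1 * v 0 ≠ 0 := by
  rw [← det_fin_two_of, ← isUnit_iff_ne_zero, ← isUnit_iff_isUnit_det,
    ← linearIndependent_rows_iff_isUnit]
  convert Iff.rfl using 2
  ext i j
  fin_cases i <;> fin_cases j <;> rfl

lemma tpow_smul (a : ℂ) (x : Fin 2 → ℂ) (N : ℕ) : tpow (a • x) N = a ^ N • tpow x N := by
  ext f
  simp [tpow, Finset.prod_mul_distrib]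

lemma LinearIndependent.of_tpow_pair {u v : Fin 2 → ℂ} {N : ℕ} (hN : N ≠ 0)
    (h : LinearIndependent ℂ ![tpow u N, tpow v N]) : LinearIndependent ℂ ![u, v] := by
  rw [linearIndependent_fin2] at h ⊢
  simp only [Matrix.cons_val_one, Matrix.cons_val_zero] at h ⊢
  refine ⟨fun hv => h.1 ?_, fun a ha => h.2 (a ^ N) ?_⟩
  · rw [hv, ← zero_smul ℂ (0 : Fin 2 → ℂ), tpow_smul, zero_pow hN, zero_smul]
  · rw [← ha, tpow_smul]

def prefixOnes (N j : ℕ) : Fin N → Fin 2 := fun i => if (i : ℕ) < j then 1 else 0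

lemma tpow_prefixOnes (x : Fin 2 → ℂ) {N j : ℕ} (hj : j ≤ N) :
    tpow x N (prefixOnes N j) = x 1 ^ j * x 0 ^ (N - j) := by
  simp only [tpow, prefixOnes, apply_ite x]
  rw [Fin.prod_univ_eq_prod_range (fun i => if i < j then x 1 else x 0),
    ← Finset.prod_range_mul_prod_Ico _ hj,
    Finset.prod_congr rfl fun i hi => if_pos (Finset.mem_range.mp hi),
    Finset.prod_congr rfl fun i hi => if_neg (Finset.mem_Ico.mp hi).1.not_gt]
  simp

lemma tpow_comp_prefixOnes {N : ℕ} (x : Fin (N + 1) → Fin 2 → ℂ) :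
    LinearMap.funLeft ℂ ℂ (fun j : Fin (N + 1) => prefixOnes N j) ∘ (fun k => tpow (x k) N) =
      fun k => projVandermonde (fun k => x k 1) (fun k => x k 0) k := by
  ext k j
  rw [Function.comp_apply, LinearMap.funLeft_apply, tpow_prefixOnes _ (Fin.is_le j),
    projVandermonde_apply, Fin.val_rev]
  congr 2
  omega

theorem linearIndependent_tpow_of_pairwise {N : ℕ} {x : Fin (N + 1) → Fin 2 → ℂ}
    (hx : PairwiseLinIndep x) : LinearIndependent ℂ (fun k => tpow (x k) N) := by
  refine LinearIndependent.of_comp (LinearMap.funLeft ℂ ℂ fun j : Fin (N + 1) => prefixOnes N j) ?_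
  rw [tpow_comp_prefixOnes]
  refine linearIndependent_rows_of_det_ne_zero ?_
  rw [det_projVandermonde, Finset.prod_ne_zero_iff]
  intro k _
  rw [Finset.prod_ne_zero_iff]
  intro l hl
  rw [mul_comm (x l 1)]
  exact linearIndependent_pair_iff_det_ne_zero.mp (hx k l (Finset.mem_Ioi.mp hl).ne)

/-- for `N+1` vectors in `ℂ²`, the family of their `N`-fold tensor
powers is linearly independent (hence a basis of the symmetric subspace of
`(ℂ²)^{⊗N}`, which has dimension `N+1`) iff the vectors are pairwise linearly
independent. -/
theorem tpow_linearIndependent_iff_pairwise (N : ℕ) (x : Fin (N + 1) → Fin 2 → ℂ) :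
    LinearIndependent ℂ (fun k : Fin (N + 1) => tpow (x k) N) ↔ PairwiseLinIndep x := by
  refine ⟨fun h k l hkl => ?_, linearIndependent_tpow_of_pairwise⟩
  have hN : N ≠ 0 := by
    rintro rfl
    exact hkl (Fin.ext (by omega))
  refine LinearIndependent.of_tpow_pair hN ?_
  convert h.comp ![k, l] (injective_pair_iff_ne.mpr hkl) using 1
  ext i : 1
  fin_cases i <;> rfl
end

section
/- With ω = e^{2πi/(N-1)} and λ, μ chosen so that λ^{N-1} μ (N-1) = 1/√N, the vectors x_k = μ|1⟩ + ω^{k-1} λ|0⟩ for 1 ≤ k ≤ N-1 and x_N = μ(1-N)^{1/N}|1⟩ satisfy ∑_{k=1}^{N} x_k^⊗N = W_N, exhibiting a decomposition of the W state into N tensor powers. -/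
open scoped BigOperators

lemma fin2_ne_zero_iff : ∀ a : Fin 2, ¬ a = 0 ↔ a = 1 := by decide
lemma fin2_ne_one_iff : ∀ a : Fin 2, ¬ a = 1 ↔ a = 0 := by decide

lemma prod_if_zero {N : ℕ} (f : Fin N → Fin 2) (A B : ℂ) :
    (∏ i, if f i = 0 then A else B) =
      A ^ (Finset.univ.filter (fun i => f i = 0)).card *
      B ^ (Finset.univ.filter (fun i => f i = 1)).card := by
  have hfilt : Finset.univ.filter (fun i => ¬ f i = 0) = Finset.univ.filter (fun i => f i = 1) := by
    ext i; simp [fin2_ne_zero_iff]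
  rw [Finset.prod_ite, Finset.prod_const, Finset.prod_const, hfilt]

lemma prod_if_one {N : ℕ} (f : Fin N → Fin 2) (C : ℂ) :
    (∏ i, if f i = 1 then C else (0:ℂ)) =
      C ^ (Finset.univ.filter (fun i => f i = 1)).card *
      0 ^ (Finset.univ.filter (fun i => f i = 0)).card := by
  have hfilt : Finset.univ.filter (fun i => ¬ f i = 1) = Finset.univ.filter (fun i => f i = 0) := by
    ext i; simp [fin2_ne_one_iff]
  rw [Finset.prod_ite, Finset.prod_const, Finset.prod_const, hfilt]

lemma sum_pow_prim {n : ℕ} (z : ℂ) (hz : IsPrimitiveRoot z n) (c : ℕ) :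
    ∑ k : Fin n, (z ^ c) ^ (k : ℕ) = if n ∣ c then (n : ℂ) else 0 := by
  rw [Fin.sum_univ_eq_sum_range]
  by_cases h : n ∣ c
  · rw [if_pos h]
    have hz1 : z ^ c = 1 := (hz.pow_eq_one_iff_dvd c).mpr h
    simp [hz1]
  · rw [if_neg h]
    have h1 : z ^ c ≠ 1 := fun hh => h ((hz.pow_eq_one_iff_dvd c).mp hh)
    rw [geom_sum_eq h1]
    have h2 : (z ^ c) ^ n = 1 := by
      rw [← pow_mul, mul_comm, pow_mul, hz.pow_eq_one, one_pow]
    simp [h2]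

lemma w_body {N : ℕ} (f : Fin N → Fin 2) :
    (∑ j : Fin N, ∏ i : Fin N, (if i = j then e1 (f i) else e0 (f i))) =
      if (Finset.univ.filter (fun i => f i = 1)).card = 1 then 1 else 0 := by
  have hfac : ∀ j i : Fin N, (if i = j then e1 (f i) else e0 (f i)) =
      if f i = (if i = j then 1 else 0) then 1 else 0 := by
    intro j i
    by_cases h : i = j <;> simp [h, e0, e1]
  have hprod : ∀ j : Fin N, (∏ i, if i = j then e1 (f i) else e0 (f i)) =
      if (∀ i, f i = (if i = j then 1 else 0)) then 1 else 0 := by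
    intro j
    simp_rw [hfac j]
    rw [Finset.prod_boole]
    simp
  simp_rw [hprod]
  have hP : ∀ j : Fin N, (∀ i, f i = (if i = j then 1 else 0)) ↔
      Finset.univ.filter (fun i => f i = 1) = {j} := by
    intro j
    rw [Finset.ext_iff]
    constructor
    · intro h i
      simp only [Finset.mem_filter, Finset.mem_univ, true_and, Finset.mem_singleton]
      rw [h i]
      by_cases hij : i = j <;> simp [hij]
    · intro h i
      have hi := h i
      simp only [Finset.mem_filter, Finset.mem_univ, true_and, Finset.mem_singleton] at hi
      by_cases hij : i = j
      · rw [if_pos hij]; exact hi.mpr hij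
      · rw [if_neg hij]
        exact (fin2_ne_one_iff (f i)).mp (fun h1 => hij (hi.mp h1))
  by_cases hm : (Finset.univ.filter (fun i => f i = 1)).card = 1
  · rw [if_pos hm]
    obtain ⟨j0, hj0⟩ := Finset.card_eq_one.mp hm
    have hiff : ∀ j : Fin N, (∀ i, f i = (if i = j then 1 else 0)) ↔ j = j0 := by
      intro j
      rw [hP j, hj0]
      constructor
      · intro h; exact (Finset.singleton_injective h).symm
      · rintro rfl; rfl
    simp_rw [hiff]
    simp
  · rw [if_neg hm]
    refine Finset.sum_eq_zero fun j _ => ?_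
    rw [if_neg]
    intro h
    exact hm (by rw [(hP j).mp h]; simp)

/-- with `ω = e^{2πi/(N-1)}` and `λ^{N-1} μ (N-1) = 1/√N`, the
vectors `x_k = μ|1⟩ + ω^{k-1} λ|0⟩` (for `1 ≤ k ≤ N-1`) and
`x_N = μ (1-N)^{1/N} |1⟩` give `∑_{k=1}^N x_k^{⊗N} = W_N`. -/
theorem W_decomposition (N : ℕ) (hN : 3 ≤ N) (lam mu r : ℂ)
    (hr : r ^ N = 1 - (N : ℂ))
    (hnorm : lam ^ (N - 1) * mu * ((N : ℂ) - 1) = 1 / (Real.sqrt N : ℂ)) :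
    (∑ k : Fin N, tpow
        (if (k : ℕ) < N - 1 then
          (fun i : Fin 2 => if i = 0 then
            Complex.exp (2 * (Real.pi : ℂ) * Complex.I / ((N : ℂ) - 1)) ^ (k : ℕ) * lam
          else mu)
        else
          (fun i : Fin 2 => if i = 1 then mu * r else 0)) N) = Wstate N := by
  obtain ⟨n, rfl⟩ : ∃ n, N = n + 1 := ⟨N - 1, by omega⟩
  have hn : 2 ≤ n := by omega
  have hcast : ((n + 1 : ℕ) : ℂ) - 1 = (n : ℂ) := by push_cast; ring
  have hprim : IsPrimitiveRoot
      (Complex.exp (2 * (Real.pi : ℂ) * Complex.I / (((n + 1 : ℕ) : ℂ) - 1))) n := by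
    rw [hcast]
    exact Complex.isPrimitiveRoot_exp n (by omega)
  set ω : ℂ := Complex.exp (2 * (Real.pi : ℂ) * Complex.I / (((n + 1 : ℕ) : ℂ) - 1)) with hω
  rw [Nat.add_sub_cancel, hcast] at hnorm
  push_cast at hr
  funext f
  rw [Finset.sum_apply, Fin.sum_univ_castSucc]
  simp only [Fin.coe_castSucc, Fin.val_last, Nat.add_sub_cancel, Fin.is_lt, if_true,
    lt_self_iff_false, if_false, tpow]
  simp only [prod_if_zero, prod_if_one]
  set c0 := (Finset.univ.filter (fun i => f i = 0)).card with hc0def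
  set m := (Finset.univ.filter (fun i => f i = 1)).card with hmdef
  have hcm : c0 + m = n + 1 := by
    have := Finset.card_filter_add_card_filter_not
      (s := (Finset.univ : Finset (Fin (n+1)))) (p := fun i => f i = 0)
    have hfilt : Finset.univ.filter (fun i => ¬ f i = 0) =
        Finset.univ.filter (fun i => f i = 1) := by
      ext i; simp [fin2_ne_zero_iff]
    rw [hfilt] at this
    simpa using this
  have hkterm : ∀ k : Fin n, (ω ^ (k : ℕ) * lam) ^ c0 * mu ^ m =
      (ω ^ c0) ^ (k : ℕ) * (lam ^ c0 * mu ^ m) := by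
    intro k; ring
  rw [Finset.sum_congr rfl (fun k _ => hkterm k), ← Finset.sum_mul,
    sum_pow_prim ω hprim c0]
  rw [Wstate, w_body, ← hmdef]
  by_cases hm1 : m = 1
  · have hc0 : c0 = n := by omega
    rw [hm1, hc0, if_pos (dvd_refl n), if_pos rfl]
    rw [zero_pow (by omega : n ≠ 0)]
    linear_combination hnorm
  · by_cases hmN : m = n + 1
    · have hc0 : c0 = 0 := by omega
      rw [hmN, hc0, if_pos (dvd_zero n), if_neg (by omega : ¬ (n + 1 = 1))]
      rw [pow_zero, pow_zero]
      linear_combination (mu ^ (n + 1)) * hr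
    · have hc0pos : c0 ≠ 0 := by omega
      have hndvd : ¬ n ∣ c0 := by
        rintro ⟨t, ht⟩
        have ht2 : t = 0 ∨ t = 1 ∨ 2 ≤ t := by omega
        rcases ht2 with h | h | h
        · subst h; omega
        · subst h; omega
        · have : n * 2 ≤ n * t := Nat.mul_le_mul_left n h
          omega
      rw [if_neg hndvd, if_neg hm1, zero_pow hc0pos]
      ring
end

section
/- For N ≥ 3 there is no decomposition of GHZ_N = (|0⟩^⊗N + |1⟩^⊗N)/√2 as a sum of two tensor powers x_1^⊗N + x_2^⊗N with both x_1 and x_2 having nonzero |0⟩-component; the only two-term decompositions (up to reordering and N-th roots of unity) use x_1 proportional to |0⟩ and x_2 proportional to |1⟩. In contrast, for N = 2 one has GHZ_2 = (1/(2√2))(|0⟩+|1⟩)^⊗2 + (1/(2√2))(|0⟩−|1⟩)^⊗2. -/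
open scoped BigOperators

lemma tpow_indicator {N : ℕ} (S : Finset (Fin N)) (x : Fin 2 → ℂ) :
    tpow x N (fun i => if i ∈ S then 1 else 0)
      = x 1 ^ S.card * x 0 ^ (N - S.card) := by
  unfold tpow
  simp only [apply_ite x]
  have h1 : Finset.univ.filter (fun i => i ∈ S) = S := by ext i; simp
  have h2 : Finset.univ.filter (fun i => ¬ i ∈ S) = Sᶜ := by ext i; simp
  rw [Finset.prod_ite, Finset.prod_const, Finset.prod_const, h1, h2,
    Finset.card_compl, Fintype.card_fin]

lemma sqrt2_ne : (Real.sqrt 2 : ℂ) ≠ 0 := by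
  have : Real.sqrt 2 ≠ 0 := by positivity
  exact_mod_cast Complex.ofReal_ne_zero.mpr this

lemma main_aux (N : ℕ) (hN : 3 ≤ N) (x₁ x₂ : Fin 2 → ℂ)
    (h : GHZ N = tpow x₁ N + tpow x₂ N) :
    ∃ c₁ c₂ : ℂ, (x₁ = c₁ • e0 ∧ x₂ = c₂ • e1) ∨ (x₁ = c₁ • e1 ∧ x₂ = c₂ • e0) := by
  obtain ⟨M, rfl⟩ : ∃ M, N = M + 3 := ⟨N - 3, by omega⟩
  set a := x₁ 0 with ha'
  set b := x₁ 1 with hb'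
  set c := x₂ 0 with hc'
  set d := x₂ 1 with hd'
  have eqn : ∀ S : Finset (Fin (M + 3)),
      b ^ S.card * a ^ (M + 3 - S.card) + d ^ S.card * c ^ (M + 3 - S.card)
        = (1 / (Real.sqrt 2 : ℂ)) *
            ((e0 1) ^ S.card * (e0 0) ^ (M + 3 - S.card)
              + (e1 1) ^ S.card * (e1 0) ^ (M + 3 - S.card)) := by
    intro S
    have hf := congrFun h (fun i => if i ∈ S then 1 else 0)
    simp only [GHZ, Pi.smul_apply, Pi.add_apply, tpow_indicator, smul_eq_mul] at hf
    rw [← hf]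
  have E0 : a ^ (M + 3) + c ^ (M + 3) = 1 / (Real.sqrt 2 : ℂ) := by
    have h0 := eqn ∅
    simpa [e0, e1] using h0
  have EN : b ^ (M + 3) + d ^ (M + 3) = 1 / (Real.sqrt 2 : ℂ) := by
    have h0 := eqn Finset.univ
    simpa [e0, e1, Finset.card_univ] using h0
  have E1 : b * a ^ (M + 2) + d * c ^ (M + 2) = 0 := by
    have h0 := eqn {(⟨0, by omega⟩ : Fin (M + 3))}
    simp only [Finset.card_singleton] at h0
    simpa [e0, e1, show M + 3 - 1 = M + 2 by omega] using h0
  have E2 : b ^ 2 * a ^ (M + 1) + d ^ 2 * c ^ (M + 1) = 0 := by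
    have hne : (⟨0, by omega⟩ : Fin (M + 3)) ≠ ⟨1, by omega⟩ := by
      simp [Fin.ext_iff]
    have h0 := eqn {(⟨0, by omega⟩ : Fin (M + 3)), ⟨1, by omega⟩}
    rw [Finset.card_pair hne] at h0
    simpa [e0, e1, show M + 3 - 2 = M + 1 by omega] using h0
  have hinv : (1 / (Real.sqrt 2 : ℂ)) ≠ 0 := one_div_ne_zero sqrt2_ne
  by_cases ha : a = 0
  · by_cases hc : c = 0
    · exfalso
      rw [ha, hc] at E0
      simp at E0
      exact sqrt2_ne E0.symm
    · -- a = 0, c ≠ 0 : d = 0, b ≠ 0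
      have hd : d = 0 := by
        rw [ha] at E1
        simp at E1
        rcases E1 with h' | h'
        · exact h'
        · exact absurd h' hc
      refine ⟨b, c, Or.inr ⟨?_, ?_⟩⟩
      · funext i
        fin_cases i <;> simp [e1, ← ha', ← hb', ha]
      · funext i
        fin_cases i <;> simp [e0, ← hc', ← hd', hd]
  · by_cases hc : c = 0
    · have hb : b = 0 := by
        rw [hc] at E1
        simp at E1
        rcases E1 with h' | h'
        · exact h'
        · exact absurd h' ha
      refine ⟨a, d, Or.inl ⟨?_, ?_⟩⟩
      · funext i
        fin_cases i <;> simp [e0, ← ha', ← hb', hb]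
      · funext i
        fin_cases i <;> simp [e1, ← hc', ← hd', hc]
    · -- both a, c nonzero : contradiction
      exfalso
      by_cases hb : b = 0
      · have hd : d = 0 := by
          rw [hb] at E1
          simp at E1
          rcases E1 with h' | h'
          · exact h'
          · exact absurd h' hc
        rw [hb, hd] at EN
        simp at EN
        exact sqrt2_ne EN.symm
      · have hd : d ≠ 0 := by
          intro hd0
          rw [hd0] at E1
          simp at E1
          rcases E1 with h' | h'
          · exact hb h'
          · exact ha h'
        have h1 : b * a ^ (M + 2) * (b * c - d * a) = 0 := by
          linear_combination a * c * E2 - d * a * E1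
        have h2 : b * c - d * a = 0 := by
          rcases mul_eq_zero.mp h1 with h' | h'
          · exact absurd h' (mul_ne_zero hb (pow_ne_zero _ ha))
          · exact h'
        have h3 : d * (a ^ (M + 3) + c ^ (M + 3)) = 0 := by
          linear_combination c * E1 - a ^ (M + 2) * h2
        rw [E0] at h3
        exact hd (by simpa [hinv] using mul_eq_zero.mp h3)

/-- for `N ≥ 3` the GHZ state admits no two-term decomposition
`x₁^{⊗N} + x₂^{⊗N}` with both `|0⟩`-components nonzero; every two-term
decomposition uses (up to reordering) `x₁ ∝ |0⟩` and `x₂ ∝ |1⟩`. In contrast,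
`GHZ₂ = (1/(2√2))((|0⟩+|1⟩)^{⊗2} + (|0⟩-|1⟩)^{⊗2})`. -/
theorem GHZ_two_term_decompositions (N : ℕ) (hN : 3 ≤ N) :
    (¬ ∃ x₁ x₂ : Fin 2 → ℂ, x₁ 0 ≠ 0 ∧ x₂ 0 ≠ 0 ∧
        GHZ N = tpow x₁ N + tpow x₂ N) ∧
      (∀ x₁ x₂ : Fin 2 → ℂ, GHZ N = tpow x₁ N + tpow x₂ N →
        ∃ c₁ c₂ : ℂ, (x₁ = c₁ • e0 ∧ x₂ = c₂ • e1) ∨ (x₁ = c₁ • e1 ∧ x₂ = c₂ • e0)) ∧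
      GHZ 2 = (1 / (2 * (Real.sqrt 2 : ℂ))) •
        (tpow (e0 + e1) 2 + tpow (e0 - e1) 2) := by
  obtain ⟨_, rfl⟩ : ∃ M, N = M + 3 := ⟨N - 3, by omega⟩
  refine ⟨?_, fun x₁ x₂ h => main_aux _ hN x₁ x₂ h, ?_⟩
  · rintro ⟨x₁, x₂, h1, h2, hdec⟩
    obtain ⟨c₁, c₂, hor⟩ := main_aux _ hN x₁ x₂ hdec
    rcases hor with ⟨hx1, hx2⟩ | ⟨hx1, hx2⟩
    · apply h2; rw [hx2]; simp [e1]
    · apply h1; rw [hx1]; simp [e1]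
  · funext f
    have key : ∀ i : Fin 2, i = 0 ∨ i = 1 := by decide
    rcases key (f 0) with h0 | h0 <;> rcases key (f 1) with h1 | h1 <;>
      simp [GHZ, tpow, e0, e1, Fin.prod_univ_two, h0, h1] <;> ring
end
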